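/- Let f_1, f_2 ∈ n RI^fin_A. Then the composite f_2 ∘ f_1, restricted to its natural domain f_1⁻¹(Dom(f_2) ∩ Im(f_1)), again belongs to n RI^fin_A, with domC(f_2 ∘ f_1) = f_1⁻¹(P_2 ∨ Q_1) and imC(f_2 ∘ f_1) = f_2(P_2 ∨ Q_1) where P_2 = domC(f_2), Q_1 = imC(f_1), and it satisfies ℓ(f_2 ∘ f_1) ≤ ℓ(f_2) + ℓ(f_1). -/

import Mathlib

/-!
Since `f₁ x` lies above some `p ∈ P₂` and some `q ∈ Q₁` whenever `x ∈ f₁⁻¹(Dom f₂)`, it lies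
above their join `p ∨ q ∈ P₂ ∨ Q₁`, and `p ∨ q = q·w` is itself a value of `f₁`; so
`f₁⁻¹(P₂ ∨ Q₁)` generates the domain of `f₂ ∘ f₁` and `f₂(P₂ ∨ Q₁)` its image. Joinlessness
transfers along injective right ideal morphisms, and a joinless code is maximal exactly when the
right ideal it generates is essential (every element has an extension in it), which also
transfers. Each coordinate of a join is a coordinate of one of its arguments, so in
`p ∨ q = q·w` one has `|w_i| ≤ |p_i|`; this gives the length bound.
-/

namespace BrinThompson

abbrev W (A : Type*) (n : ℕ) : Type _ := Fin n → List A

variable {A : Type*} {n : ℕ}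

/-- Coordinatewise concatenation in `nA*`. -/
def cat (u x : W A n) : W A n := fun i => u i ++ x i

/-- `u ≤_init v` : `u` is an initial factor of `v`. -/
def initLE (u v : W A n) : Prop := ∃ x : W A n, v = cat u x

/-- `w` is the join (least upper bound) of `u` and `v` w.r.t. `≤_init`. -/
def isJoin (u v w : W A n) : Prop :=
  initLE u w ∧ initLE v w ∧ ∀ z : W A n, initLE u z → initLE v z → initLE w z

/-- `u` and `v` have a join. -/
def HasJoin (u v : W A n) : Prop := ∃ w : W A n, isJoin u v w

/-- A joinless code: no two distinct elements have a join. -/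
def JoinlessCode (S : Set (W A n)) : Prop :=
  ∀ u ∈ S, ∀ v ∈ S, u ≠ v → ¬ HasJoin u v

/-- A maximal joinless code: joinless, and every element of `nA*` has a join
with some element of the code. -/
def MaxJoinlessCode (S : Set (W A n)) : Prop :=
  JoinlessCode S ∧ ∀ x : W A n, ∃ p ∈ S, HasJoin x p

/-- The right ideal `C · nA*` generated by `C`. -/
def genIdeal (C : Set (W A n)) : Set (W A n) := {w | ∃ c ∈ C, ∃ x : W A n, w = cat c x}

def IsRightIdeal (R : Set (W A n)) : Prop := genIdeal R = R

/-- An initial factor code: pairwise `≤_init`-incomparable set. -/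
def InitFactorCode (S : Set (W A n)) : Prop :=
  ∀ u ∈ S, ∀ v ∈ S, initLE u v → u = v

/-- `A_{ε,n}`: tuples with one coordinate a single letter and the rest empty. -/
def Aeps (A : Type*) (n : ℕ) : Set (W A n) :=
  {w | ∃ i : Fin n, ∃ a : A, w i = [a] ∧ ∀ j : Fin n, j ≠ i → w j = []}

/-- `(ε)^n`, the tuple of empty strings. -/
def epsn (A : Type*) (n : ℕ) : W A n := fun _ => []

/-- `nA^ω`: `n`-tuples of one-sided infinite sequences over `A`. -/
abbrev Winf (A : Type*) (n : ℕ) : Type _ := Fin n → ℕ → A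

/-- Concatenation of a finite tuple `p ∈ nA*` with an infinite tuple `u ∈ nA^ω`. -/
def catInf (p : W A n) (u : Winf A n) : Winf A n :=
  fun i k => if h : k < (p i).length then (p i).get ⟨k, h⟩ else u i (k - (p i).length)

/-- `v` is an interior vertex of the `P`-dag: a strict initial factor of
some element of `P`. -/
def Interior (P : Set (W A n)) (v : W A n) : Prop := ∃ p ∈ P, initLE v p ∧ v ≠ p

/-- The child of `v` in direction `i`, extended by letter `a`. -/
def child (v : W A n) (i : Fin n) (a : A) : W A n := Function.update v i (v i ++ [a])

/-- A leaf of the interior dag of `P`: an interior vertex none of whose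
children is interior. -/
def InteriorLeaf (P : Set (W A n)) (v : W A n) : Prop :=
  Interior P v ∧ ∀ (i : Fin n) (a : A), ¬ Interior P (child v i a)

/-- `v_+ = (v · A_{ε,n}) ∩ P`, the set of children of `v` belonging to `P`. -/
def vplus (P : Set (W A n)) (v : W A n) : Set (W A n) :=
  {w | (∃ (i : Fin n) (a : A), w = child v i a) ∧ w ∈ P}

/-- The depth of a vertex: the sum of the coordinate lengths. -/
def depth (v : W A n) : ℕ := ∑ i, (v i).length

/-- One-step restriction of `P` at `(p, i)`. -/
def oneStep (P : Set (W A n)) (p : W A n) (i : Fin n) : Set (W A n) :=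
  (P \ {p}) ∪ {w | ∃ a : A, w = child p i a}

/-- One step in a sequence of one-step restrictions. -/
def RestrStep (P Q : Set (W A n)) : Prop := ∃ p ∈ P, ∃ i : Fin n, Q = oneStep P p i

/-- The box code `A^{k_1} × … × A^{k_n}`. -/
def box (A : Type*) {n : ℕ} (k : Fin n → ℕ) : Set (W A n) :=
  {w | ∀ i : Fin n, (w i).length = k i}

/-- Elementwise join `P ∨ Q` of two sets, ranging over the joins that exist. -/
def setJoin (P Q : Set (W A n)) : Set (W A n) :=
  {w | ∃ p ∈ P, ∃ q ∈ Q, isJoin p q w}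

/-- `ℓ(S)`: the maximum coordinate length occurring in `S`. -/
noncomputable def ell (S : Set (W A n)) : ℕ :=
  sSup {m | ∃ z ∈ S, ∃ i : Fin n, (z i).length = m}

/-- An element of `n RI^fin_A`: an injective right ideal morphism of `nA*`
whose domain code and image code are finite maximal joinless codes.
`toFun` is a total function whose values outside `Dom` are irrelevant. -/
structure RIMfin (A : Type*) (n : ℕ) where
  Dom : Set (W A n)
  toFun : W A n → W A n
  domC : Set (W A n)
  imC : Set (W A n)
  ideal : IsRightIdeal Dom
  morph : ∀ x ∈ Dom, ∀ w : W A n, toFun (cat x w) = cat (toFun x) w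
  inj : Set.InjOn toFun Dom
  domC_gen : genIdeal domC = Dom
  imC_gen : genIdeal imC = toFun '' Dom
  domC_fin : domC.Finite
  domC_max : MaxJoinlessCode domC
  imC_fin : imC.Finite
  imC_max : MaxJoinlessCode imC

/-- `ℓ(f) = max{ℓ(z) : z ∈ domC(f) ∪ imC(f)}`. -/
noncomputable def ellF (F : RIMfin A n) : ℕ := ell (F.domC ∪ F.imC)

/-- `G` extends `F` (as partial functions). -/
def Extends (F G : RIMfin A n) : Prop :=
  F.Dom ⊆ G.Dom ∧ ∀ x ∈ F.Dom, G.toFun x = F.toFun x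

/-- `F` and `G` are equal as partial functions. -/
def EquivRIM (F G : RIMfin A n) : Prop :=
  F.Dom = G.Dom ∧ ∀ x ∈ F.Dom, F.toFun x = G.toFun x

/-- `G` is a maximal extension of `F` in `n RI^fin_A`. -/
def MaxExtension (F G : RIMfin A n) : Prop :=
  Extends F G ∧ ∀ H : RIMfin A n, Extends G H → EquivRIM G H

theorem cat_assoc (u v w : W A n) : cat (cat u v) w = cat u (cat v w) := by
  funext i; simp [cat]

theorem cat_epsn (u : W A n) : cat u (epsn A n) = u := by
  funext i; simp [cat, epsn]

theorem length_cat_apply (u w : W A n) (i : Fin n) :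
    (cat u w i).length = (u i).length + (w i).length :=
  List.length_append

section InitialFactor

variable {u v w z : W A n}

theorem initLE_iff : initLE u v ↔ ∀ i, u i <+: v i := by
  constructor
  · rintro ⟨x, rfl⟩ i; exact ⟨x i, rfl⟩
  · intro h
    exact ⟨fun i => (v i).drop (u i).length,
      funext fun i => (List.prefix_iff_eq_append.1 (h i)).symm⟩

theorem initLE_refl (u : W A n) : initLE u u := ⟨epsn A n, (cat_epsn u).symm⟩

theorem initLE_cat (u w : W A n) : initLE u (cat u w) := ⟨w, rfl⟩

theorem initLE_trans (huv : initLE u v) (hvw : initLE v w) : initLE u w := by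
  obtain ⟨x, rfl⟩ := huv
  obtain ⟨y, rfl⟩ := hvw
  exact ⟨cat x y, cat_assoc u x y⟩

theorem initLE_antisymm (huv : initLE u v) (hvu : initLE v u) : u = v := by
  rw [initLE_iff] at huv hvu
  funext i
  exact (huv i).eq_of_length ((huv i).length_le.antisymm (hvu i).length_le)

theorem isJoin_comm : isJoin u v w ↔ isJoin v u w := by
  constructor <;> exact fun ⟨hu, hv, hle⟩ => ⟨hv, hu, fun z h₁ h₂ => hle z h₂ h₁⟩

theorem isJoin_longer (hu : initLE u z) (hv : initLE v z) :
    isJoin u v (fun i => if (u i).length ≤ (v i).length then v i else u i) := by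
  rw [initLE_iff] at hu hv
  refine ⟨initLE_iff.2 fun i => ?_, initLE_iff.2 fun i => ?_, fun z' hu' hv' => ?_⟩
  · split_ifs with h
    · exact List.prefix_of_prefix_length_le (hu i) (hv i) h
    · exact List.prefix_refl _
  · split_ifs with h
    · exact List.prefix_refl _
    · exact List.prefix_of_prefix_length_le (hv i) (hu i) (by omega)
  · rw [initLE_iff] at hu' hv' ⊢
    intro i
    split_ifs
    · exact hv' i
    · exact hu' i

theorem exists_isJoin_initLE (hu : initLE u z) (hv : initLE v z) :
    ∃ w, isJoin u v w ∧ initLE w z :=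
  ⟨_, isJoin_longer hu hv, (isJoin_longer hu hv).2.2 z hu hv⟩

theorem hasJoin_iff : HasJoin u v ↔ ∃ z, initLE u z ∧ initLE v z := by
  constructor
  · rintro ⟨w, hu, hv, -⟩
    exact ⟨w, hu, hv⟩
  · rintro ⟨z, hu, hv⟩
    exact ⟨_, isJoin_longer hu hv⟩

theorem isJoin_unique {w' : W A n} (h : isJoin u v w) (h' : isJoin u v w') : w = w' :=
  initLE_antisymm (h.2.2 w' h'.1 h'.2.1) (h'.2.2 w h.1 h.2.1)

theorem isJoin.eq_or_eq (h : isJoin u v w) (i : Fin n) : w i = u i ∨ w i = v i := by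
  rw [isJoin_unique h (isJoin_longer h.1 h.2.1)]
  dsimp only
  split_ifs
  · exact Or.inr rfl
  · exact Or.inl rfl

theorem isJoin.length_le_of_eq_cat (h : isJoin u v (cat v w)) (i : Fin n) :
    (w i).length ≤ (u i).length := by
  have hlen := length_cat_apply v w i
  rcases h.eq_or_eq i with h | h <;> rw [h] at hlen <;> omega

end InitialFactor

section Codes

variable {C P Q R S : Set (W A n)}

theorem JoinlessCode.eq_of_hasJoin (hS : JoinlessCode S) {u v : W A n} (hu : u ∈ S) (hv : v ∈ S)
    (h : HasJoin u v) : u = v := by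
  by_contra hne
  exact hS u hu v hv hne h

theorem JoinlessCode.eq_of_initLE (hS : JoinlessCode S) {u v : W A n} (hu : u ∈ S) (hv : v ∈ S)
    (h : initLE u v) : u = v :=
  hS.eq_of_hasJoin hu hv (hasJoin_iff.2 ⟨v, h, initLE_refl v⟩)

theorem JoinlessCode.setJoin (hP : JoinlessCode P) (hQ : JoinlessCode Q) :
    JoinlessCode (setJoin P Q) := by
  rintro r ⟨p, hp, q, hq, hr⟩ r' ⟨p', hp', q', hq', hr'⟩ hne hj
  obtain ⟨z, hrz, hr'z⟩ := hasJoin_iff.1 hj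
  obtain rfl : p = p' :=
    hP.eq_of_hasJoin hp hp' (hasJoin_iff.2 ⟨z, initLE_trans hr.1 hrz, initLE_trans hr'.1 hr'z⟩)
  obtain rfl : q = q' :=
    hQ.eq_of_hasJoin hq hq' (hasJoin_iff.2 ⟨z, initLE_trans hr.2.1 hrz, initLE_trans hr'.2.1 hr'z⟩)
  exact hne (isJoin_unique hr hr')

theorem finite_setJoin (hP : P.Finite) (hQ : Q.Finite) : (setJoin P Q).Finite := by
  refine (hP.biUnion fun p _ => hQ.biUnion fun q _ =>
    Set.Subsingleton.finite (s := {w | isJoin p q w}) fun w hw w' hw' => isJoin_unique hw hw').subset ?_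
  rintro w ⟨p, hp, q, hq, hw⟩
  simp only [Set.mem_iUnion]
  exact ⟨p, hp, q, hq, hw⟩

theorem subset_genIdeal (C : Set (W A n)) : C ⊆ genIdeal C :=
  fun c hc => ⟨c, hc, epsn A n, (cat_epsn c).symm⟩

theorem isRightIdeal_iff : IsRightIdeal R ↔ ∀ x ∈ R, ∀ w, cat x w ∈ R := by
  constructor
  · intro hR x hx w
    rw [← hR]
    exact ⟨x, hx, w, rfl⟩
  · intro hR
    refine (Set.Subset.antisymm ?_ (subset_genIdeal R))
    rintro _ ⟨x, hx, w, rfl⟩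
    exact hR x hx w

theorem IsRightIdeal.cat_mem (hR : IsRightIdeal R) {x : W A n} (hx : x ∈ R) (w : W A n) :
    cat x w ∈ R :=
  isRightIdeal_iff.1 hR x hx w

theorem genIdeal_image {f : W A n → W A n} (hf : ∀ x ∈ C, ∀ w, f (cat x w) = cat (f x) w) :
    genIdeal (f '' C) = f '' genIdeal C := by
  ext y
  constructor
  · rintro ⟨_, ⟨c, hc, rfl⟩, w, rfl⟩
    exact ⟨cat c w, ⟨c, hc, w, rfl⟩, hf c hc w⟩
  · rintro ⟨_, ⟨c, hc, w, rfl⟩, rfl⟩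
    exact ⟨f c, ⟨c, hc, rfl⟩, w, hf c hc w⟩

/-- A right ideal is essential when it meets every principal right ideal `x · nA*`. -/
def IsEssential (R : Set (W A n)) : Prop := ∀ x : W A n, ∃ y ∈ R, initLE x y

theorem maxJoinlessCode_iff : MaxJoinlessCode C ↔ JoinlessCode C ∧ IsEssential (genIdeal C) := by
  refine and_congr_right fun _ => forall_congr' fun x => ?_
  constructor
  · rintro ⟨p, hp, hj⟩
    obtain ⟨z, hxz, ⟨w, rfl⟩⟩ := hasJoin_iff.1 hj
    exact ⟨cat p w, ⟨p, hp, w, rfl⟩, hxz⟩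
  · rintro ⟨_, ⟨c, hc, w, rfl⟩, hxy⟩
    exact ⟨c, hc, hasJoin_iff.2 ⟨_, hxy, initLE_cat c w⟩⟩

end Codes

section Length

variable {S : Set (W A n)}

theorem ell_le {B : ℕ} (h : ∀ z ∈ S, ∀ i : Fin n, (z i).length ≤ B) : ell S ≤ B :=
  csSup_le' fun _ ⟨z, hz, i, hm⟩ => hm ▸ h z hz i

theorem length_le_ell (hS : S.Finite) {z : W A n} (hz : z ∈ S) (i : Fin n) :
    (z i).length ≤ ell S := by
  refine le_csSup ?_ ⟨z, hz, i, rfl⟩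
  refine ((hS.biUnion fun z _ => Set.finite_range fun i : Fin n => (z i).length).bddAbove).mono ?_
  rintro _ ⟨z, hz, i, rfl⟩
  exact Set.mem_biUnion hz ⟨i, rfl⟩

end Length

namespace RIMfin

variable (F : RIMfin A n) {x y : W A n}

theorem cat_mem_Dom (hx : x ∈ F.Dom) (w : W A n) : cat x w ∈ F.Dom :=
  F.ideal.cat_mem hx w

theorem mem_Dom_iff : x ∈ F.Dom ↔ ∃ d ∈ F.domC, initLE d x := by
  rw [← F.domC_gen]; rfl

theorem mem_image_iff : y ∈ F.toFun '' F.Dom ↔ ∃ c ∈ F.imC, initLE c y := by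
  rw [← F.imC_gen]; rfl

theorem domC_subset_Dom : F.domC ⊆ F.Dom :=
  F.domC_gen ▸ subset_genIdeal F.domC

theorem apply_initLE_apply (hx : x ∈ F.Dom) (h : initLE x y) :
    initLE (F.toFun x) (F.toFun y) := by
  obtain ⟨w, rfl⟩ := h
  exact ⟨w, F.morph x hx w⟩

theorem eq_cat_of_apply_eq_cat {s v : W A n} (hx : x ∈ F.Dom) (hs : s ∈ F.Dom)
    (h : F.toFun x = cat (F.toFun s) v) : x = cat s v :=
  F.inj hx (F.cat_mem_Dom hs v) (h.trans (F.morph s hs v).symm)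

theorem apply_mem_imC {d : W A n} (hd : d ∈ F.domC) : F.toFun d ∈ F.imC := by
  have hdD := F.domC_subset_Dom hd
  obtain ⟨c, hc, v, hv⟩ := (F.mem_image_iff).1 ⟨d, hdD, rfl⟩
  obtain ⟨t, ht, rfl⟩ := (F.mem_image_iff).2 ⟨c, hc, initLE_refl c⟩
  obtain ⟨d', hd', hd't⟩ := (F.mem_Dom_iff).1 ht
  have htd : initLE t d := ⟨v, F.eq_cat_of_apply_eq_cat hdD ht hv⟩
  obtain rfl : d' = d := F.domC_max.1.eq_of_initLE hd' hd (initLE_trans hd't htd)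
  exact initLE_antisymm htd hd't ▸ hc

theorem image_domC : F.toFun '' F.domC = F.imC := by
  refine Set.Subset.antisymm (Set.image_subset_iff.2 fun d hd => F.apply_mem_imC hd) ?_
  intro c hc
  obtain ⟨t, ht, rfl⟩ := (F.mem_image_iff).2 ⟨c, hc, initLE_refl c⟩
  obtain ⟨d, hd, hdt⟩ := (F.mem_Dom_iff).1 ht
  exact ⟨d, hd, F.imC_max.1.eq_of_initLE (F.apply_mem_imC hd) hc
    (F.apply_initLE_apply (F.domC_subset_Dom hd) hdt)⟩

theorem exists_mem_domC_apply_cat {q : W A n} (hq : q ∈ F.imC) (w : W A n) :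
    ∃ d ∈ F.domC, F.toFun (cat d w) = cat q w := by
  obtain ⟨d, hd, rfl⟩ := F.image_domC ▸ hq
  exact ⟨d, hd, F.morph d (F.domC_subset_Dom hd) w⟩

theorem isEssential_Dom : IsEssential F.Dom :=
  F.domC_gen ▸ (maxJoinlessCode_iff.1 F.domC_max).2

theorem isEssential_image : IsEssential (F.toFun '' F.Dom) :=
  F.imC_gen ▸ (maxJoinlessCode_iff.1 F.imC_max).2

theorem length_le_ellF_of_mem_domC {d : W A n} (hd : d ∈ F.domC) (i : Fin n) :
    (d i).length ≤ ellF F :=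
  length_le_ell (F.domC_fin.union F.imC_fin) (Or.inl hd) i

theorem length_le_ellF_of_mem_imC {c : W A n} (hc : c ∈ F.imC) (i : Fin n) :
    (c i).length ≤ ellF F :=
  length_le_ell (F.domC_fin.union F.imC_fin) (Or.inr hc) i

end RIMfin

section Transfer

variable (F : RIMfin A n) {R S : Set (W A n)}

theorem IsRightIdeal.preimage (hR : IsRightIdeal R) : IsRightIdeal (F.Dom ∩ F.toFun ⁻¹' R) := by
  refine isRightIdeal_iff.2 fun x ⟨hx, hxR⟩ w => ⟨F.cat_mem_Dom hx w, ?_⟩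
  rw [Set.mem_preimage, F.morph x hx w]
  exact hR.cat_mem hxR w

theorem JoinlessCode.preimage (hS : JoinlessCode S) : JoinlessCode (F.Dom ∩ F.toFun ⁻¹' S) := by
  rintro u ⟨hu, huS⟩ v ⟨hv, hvS⟩ hne hj
  obtain ⟨z, huz, hvz⟩ := hasJoin_iff.1 hj
  exact hS _ huS _ hvS (fun h => hne (F.inj hu hv h))
    (hasJoin_iff.2 ⟨F.toFun z, F.apply_initLE_apply hu huz, F.apply_initLE_apply hv hvz⟩)

theorem JoinlessCode.image (hS : JoinlessCode S) (hSD : S ⊆ F.Dom) :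
    JoinlessCode (F.toFun '' S) := by
  rintro _ ⟨r, hr, rfl⟩ _ ⟨r', hr', rfl⟩ hne hj
  obtain ⟨_, ⟨t, rfl⟩, t', ht⟩ := hasJoin_iff.1 hj
  have hrt : cat r t = cat r' t' := by
    refine F.inj (F.cat_mem_Dom (hSD hr) t) (F.cat_mem_Dom (hSD hr') t') ?_
    rw [F.morph r (hSD hr) t, F.morph r' (hSD hr') t']
    exact ht
  exact hS r hr r' hr' (ne_of_apply_ne _ hne)
    (hasJoin_iff.2 ⟨cat r t, initLE_cat r t, t', hrt⟩)

theorem RIMfin.finite_inter_preimage (hS : S.Finite) : (F.Dom ∩ F.toFun ⁻¹' S).Finite :=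
  Set.Finite.of_finite_image (hS.subset (Set.image_subset_iff.2 fun _ hx => hx.2))
    (F.inj.mono Set.inter_subset_left)

theorem IsEssential.preimage (hR : IsEssential R) : IsEssential (F.Dom ∩ F.toFun ⁻¹' R) := by
  intro x
  obtain ⟨y, hy, hxy⟩ := F.isEssential_Dom x
  obtain ⟨_, hz, t, rfl⟩ := hR (F.toFun y)
  refine ⟨cat y t, ⟨F.cat_mem_Dom hy t, ?_⟩, initLE_trans hxy (initLE_cat y t)⟩
  rw [Set.mem_preimage, F.morph y hy t]
  exact hz

theorem IsEssential.image (hR : IsEssential R) : IsEssential (F.toFun '' R) := by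
  intro x
  obtain ⟨_, ⟨u, hu, rfl⟩, hxu⟩ := F.isEssential_image x
  obtain ⟨_, hz, t, rfl⟩ := hR u
  exact ⟨_, ⟨cat u t, hz, rfl⟩, F.morph u hu t ▸ initLE_trans hxu (initLE_cat _ t)⟩

end Transfer

namespace RIMfin

variable (F₂ F₁ : RIMfin A n)

theorem setJoin_subset_Dom : setJoin F₂.domC F₁.imC ⊆ F₂.Dom := by
  rintro r ⟨p, hp, q, hq, hr⟩
  exact (F₂.mem_Dom_iff).2 ⟨p, hp, hr.1⟩

theorem setJoin_subset_image : setJoin F₂.domC F₁.imC ⊆ F₁.toFun '' F₁.Dom := by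
  rintro r ⟨p, hp, q, hq, hr⟩
  exact (F₁.mem_image_iff).2 ⟨q, hq, hr.2.1⟩

theorem genIdeal_inter_preimage_setJoin :
    genIdeal (F₁.Dom ∩ F₁.toFun ⁻¹' setJoin F₂.domC F₁.imC) = F₁.Dom ∩ F₁.toFun ⁻¹' F₂.Dom := by
  refine Set.Subset.antisymm ?_ ?_
  · rintro _ ⟨s, ⟨hs, hsS⟩, w, rfl⟩
    exact (F₂.ideal.preimage F₁).cat_mem ⟨hs, setJoin_subset_Dom F₂ F₁ hsS⟩ w
  · rintro x ⟨hx, hFx⟩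
    obtain ⟨p, hp, hpx⟩ := (F₂.mem_Dom_iff).1 hFx
    obtain ⟨q, hq, hqx⟩ := (F₁.mem_image_iff).1 ⟨x, hx, rfl⟩
    obtain ⟨_, hr, v, hv⟩ := exists_isJoin_initLE hpx hqx
    obtain ⟨w, rfl⟩ := hr.2.1
    obtain ⟨d, hd, hdw⟩ := F₁.exists_mem_domC_apply_cat hq w
    have hdwD := F₁.cat_mem_Dom (F₁.domC_subset_Dom hd) w
    refine ⟨cat d w, ⟨hdwD, ?_⟩, v, F₁.eq_cat_of_apply_eq_cat hx hdwD (hdw ▸ hv)⟩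
    rw [Set.mem_preimage, hdw]
    exact ⟨p, hp, q, hq, hr⟩

theorem comp_apply_cat {x : W A n} (hx : x ∈ F₁.Dom ∩ F₁.toFun ⁻¹' F₂.Dom) (w : W A n) :
    F₂.toFun (F₁.toFun (cat x w)) = cat (F₂.toFun (F₁.toFun x)) w := by
  rw [F₁.morph x hx.1 w, F₂.morph _ hx.2 w]

theorem genIdeal_image_setJoin :
    genIdeal (F₂.toFun '' setJoin F₂.domC F₁.imC) =
      (F₂.toFun ∘ F₁.toFun) '' (F₁.Dom ∩ F₁.toFun ⁻¹' F₂.Dom) := by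
  have hS : F₂.toFun '' setJoin F₂.domC F₁.imC =
      (F₂.toFun ∘ F₁.toFun) '' (F₁.Dom ∩ F₁.toFun ⁻¹' setJoin F₂.domC F₁.imC) := by
    rw [Set.image_comp, Set.image_inter_preimage,
      Set.inter_eq_right.2 (setJoin_subset_image F₂ F₁)]
  rw [hS, genIdeal_image fun x hx => F₂.comp_apply_cat F₁ ⟨hx.1, setJoin_subset_Dom F₂ F₁ hx.2⟩,
    genIdeal_inter_preimage_setJoin]

def comp : RIMfin A n where
  Dom := F₁.Dom ∩ F₁.toFun ⁻¹' F₂.Dom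
  toFun := F₂.toFun ∘ F₁.toFun
  domC := F₁.Dom ∩ F₁.toFun ⁻¹' setJoin F₂.domC F₁.imC
  imC := F₂.toFun '' setJoin F₂.domC F₁.imC
  ideal := F₂.ideal.preimage F₁
  morph x hx w := F₂.comp_apply_cat F₁ hx w
  inj := F₂.inj.comp (F₁.inj.mono Set.inter_subset_left) fun _ hx => hx.2
  domC_gen := genIdeal_inter_preimage_setJoin F₂ F₁
  imC_gen := genIdeal_image_setJoin F₂ F₁
  domC_fin := F₁.finite_inter_preimage (finite_setJoin F₂.domC_fin F₁.imC_fin)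
  domC_max := by
    refine maxJoinlessCode_iff.2 ⟨(F₂.domC_max.1.setJoin F₁.imC_max.1).preimage F₁, ?_⟩
    rw [genIdeal_inter_preimage_setJoin]
    exact F₂.isEssential_Dom.preimage F₁
  imC_fin := (finite_setJoin F₂.domC_fin F₁.imC_fin).image _
  imC_max := by
    refine maxJoinlessCode_iff.2
      ⟨(F₂.domC_max.1.setJoin F₁.imC_max.1).image F₂ (setJoin_subset_Dom F₂ F₁), ?_⟩
    rw [genIdeal_image_setJoin, Set.image_comp]
    exact ((F₂.isEssential_Dom.preimage F₁).image F₁).image F₂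

theorem ellF_comp_le : ellF (F₂.comp F₁) ≤ ellF F₂ + ellF F₁ := by
  refine ell_le ?_
  rintro z (⟨hz, p, hp, q, hq, hr⟩ | ⟨r, ⟨p, hp, q, hq, hr⟩, rfl⟩) i
  · obtain ⟨w, hw⟩ := hr.2.1
    obtain ⟨d, hd, hdw⟩ := F₁.exists_mem_domC_apply_cat hq w
    have hz_eq : z = cat d w :=
      F₁.inj hz (F₁.cat_mem_Dom (F₁.domC_subset_Dom hd) w) (hw.trans hdw.symm)
    have hw_le := (hw ▸ hr).length_le_of_eq_cat i
    have hd_le := F₁.length_le_ellF_of_mem_domC hd i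
    have hp_le := F₂.length_le_ellF_of_mem_domC hp i
    rw [hz_eq, length_cat_apply]
    omega
  · obtain ⟨w, rfl⟩ := hr.1
    have hw_le := (isJoin_comm.1 hr).length_le_of_eq_cat i
    have hp_le := F₂.length_le_ellF_of_mem_imC (F₂.apply_mem_imC hp) i
    have hq_le := F₁.length_le_ellF_of_mem_imC hq i
    rw [F₂.morph p (F₂.domC_subset_Dom hp) w, length_cat_apply]
    omega

end RIMfin

theorem composition_in_RIMfin_general {A : Type*} {n : ℕ} (F₁ F₂ : RIMfin A n) :
    ∃ G : RIMfin A n,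
      G.Dom = {x | x ∈ F₁.Dom ∧ F₁.toFun x ∈ F₂.Dom} ∧
      (∀ x ∈ G.Dom, G.toFun x = F₂.toFun (F₁.toFun x)) ∧
      G.domC = {x | x ∈ F₁.Dom ∧ F₁.toFun x ∈ setJoin F₂.domC F₁.imC} ∧
      G.imC = F₂.toFun '' setJoin F₂.domC F₁.imC ∧
      ellF G ≤ ellF F₂ + ellF F₁ :=
  ⟨F₂.comp F₁, rfl, fun _ _ => rfl, rfl, rfl, RIMfin.ellF_comp_le F₂ F₁⟩

/-- The composite of two elements of `n RI^fin_A`, restricted to its natural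
domain, is again in `n RI^fin_A`, with `domC(f₂∘f₁) = f₁⁻¹(P₂ ∨ Q₁)`,
`imC(f₂∘f₁) = f₂(P₂ ∨ Q₁)`, and `ℓ(f₂∘f₁) ≤ ℓ(f₂) + ℓ(f₁)`. -/
theorem composition_in_RIMfin {A : Type*} [Fintype A] [Nonempty A] {n : ℕ}
    (hn : 1 ≤ n) (F₁ F₂ : RIMfin A n) :
    ∃ G : RIMfin A n,
      G.Dom = {x | x ∈ F₁.Dom ∧ F₁.toFun x ∈ F₂.Dom} ∧
      (∀ x ∈ G.Dom, G.toFun x = F₂.toFun (F₁.toFun x)) ∧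
      G.domC = {x | x ∈ F₁.Dom ∧ F₁.toFun x ∈ setJoin F₂.domC F₁.imC} ∧
      G.imC = F₂.toFun '' setJoin F₂.domC F₁.imC ∧
      ellF G ≤ ellF F₂ + ellF F₁ :=
  composition_in_RIMfin_general F₁ F₂

end BrinThompson
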